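/- With α_{ij} = 1/(i! j!) and β_i = ∑_{q=max(0,2i-s)}^{min(2i,s)} (-1)^{i-q} α_{q,2i-q}, the smallest positive integer ζ with β_ζ ≠ 0 is ζ = ⌊s/2⌋ + 1; that is, β_i = 0 for 1 ≤ i ≤ ⌊s/2⌋ and β_{⌊s/2⌋+1} ≠ 0 (assuming ⌊s/2⌋ + 1 ≤ s). -/

import Mathlib

/-!
Since `1 / (q! (n-q)!) = C(n,q) / n!`, `β_i` is `(-1)^i / (2i)!` times the alternating sum of
`C(2i, q)` over the window `max(0, 2i-s) ≤ q ≤ min(2i, s)`. For `2i ≤ s` the window is all of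
`0..2i` and the sum is `(1 - 1)^(2i) = 0`. For `s < 2i ≤ 2s` the partial sums
`∑_{q ≤ b} (-1)^q C(m+1, q) = (-1)^b C(m, b)` evaluate the window sum to
`2 (-1)^s C(2i-1, s) ≠ 0`: the two boundary terms `C(2i-1, s)` and `C(2i-1, 2i-1-s)` add up
rather than cancel because `2i - 1` is odd.
-/

open Finset
open scoped Nat

/-- The paper's `β_i`; the truncated subtraction `2 * i - s` is its `max(0, 2i - s)`. -/
noncomputable def beta (s i : ℕ) : ℝ :=
  ∑ q ∈ Icc (2 * i - s) (min (2 * i) s), (-1 : ℝ) ^ ((i : ℤ) - q) / (q ! * (2 * i - q)!)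

theorem Int.alternating_sum_Icc_choose {m a b : ℕ} (h : a ≤ b) :
    ∑ q ∈ Icc (a + 1) b, ((-1) ^ q * (m + 1).choose q : ℤ) =
      (-1) ^ b * m.choose b - (-1) ^ a * m.choose a := by
  rw [← Ico_add_one_right_eq_Icc, sum_Ico_eq_sub _ (by omega),
    Int.alternating_sum_range_choose_eq_choose, Int.alternating_sum_range_choose_eq_choose]

lemma neg_one_zpow_natCast_sub {K : Type*} [DivisionRing K] (i q : ℕ) :
    (-1 : K) ^ ((i : ℤ) - q) = (-1) ^ i * (-1) ^ q := by
  rw [zpow_sub₀ (by norm_num), zpow_natCast, zpow_natCast, div_eq_mul_inv, ← inv_pow, inv_neg,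
    inv_one]

lemma beta_eq_alternating_sum_choose (s i : ℕ) :
    beta s i = (-1) ^ i / (2 * i)! *
      ((∑ q ∈ Icc (2 * i - s) (min (2 * i) s), (-1) ^ q * (2 * i).choose q : ℤ) : ℝ) := by
  rw [beta, Int.cast_sum, mul_sum]
  refine sum_congr rfl fun q hq => ?_
  have hq : q ≤ 2 * i := (mem_Icc.mp hq).2.trans (min_le_left _ _)
  rw [Int.cast_mul, Int.cast_pow, Int.cast_neg, Int.cast_one, Int.cast_natCast,
    Nat.cast_choose ℝ hq, neg_one_zpow_natCast_sub]
  field_simp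

lemma beta_eq_zero {s i : ℕ} (hi : 1 ≤ i) (h : 2 * i ≤ s) : beta s i = 0 := by
  rw [beta_eq_alternating_sum_choose, Nat.sub_eq_zero_of_le h, min_eq_left h,
    ← Ico_add_one_right_eq_Icc, ← range_eq_Ico,
    Int.alternating_sum_range_choose_of_ne (by omega), Int.cast_zero, mul_zero]

lemma beta_ne_zero {s i : ℕ} (h : s < 2 * i) (h' : i ≤ s) : beta s i ≠ 0 := by
  set m := 2 * i - 1
  have hm : 2 * i = m + 1 := by omega
  have hsum : ∑ q ∈ Icc (2 * i - s) (min (2 * i) s), ((-1) ^ q * (2 * i).choose q : ℤ) =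
      2 * (-1) ^ s * m.choose s := by
    rw [min_eq_right h.le, show 2 * i - s = (m - s) + 1 by omega, hm,
      Int.alternating_sum_Icc_choose (by omega), Nat.choose_symm (by omega)]
    have hpar : (-1 : ℤ) ^ (m - s) = (-1) ^ (s + 1) := by
      rw [neg_one_pow_eq_pow_mod_two, neg_one_pow_eq_pow_mod_two (s + 1)]
      congr 1
      omega
    rw [hpar]
    ring
  rw [beta_eq_alternating_sum_choose, hsum]
  have hchoose := Nat.choose_pos (show s ≤ m by omega)
  positivity

theorem zeta_is_first_nonzero_beta_general (s : ℕ) (hz : s / 2 + 1 ≤ s) :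
    (∀ i : ℕ, 1 ≤ i → i ≤ s / 2 →
      (∑ q ∈ Finset.Icc (2 * i - s) (min (2 * i) s),
          ((-1 : ℝ) ^ ((i : ℤ) - (q : ℤ))) /
            ((Nat.factorial q : ℝ) * (Nat.factorial (2 * i - q) : ℝ))) = 0)
    ∧ (∑ q ∈ Finset.Icc (2 * (s / 2 + 1) - s) (min (2 * (s / 2 + 1)) s),
        ((-1 : ℝ) ^ (((s / 2 + 1 : ℕ) : ℤ) - (q : ℤ))) /
          ((Nat.factorial q : ℝ) * (Nat.factorial (2 * (s / 2 + 1) - q) : ℝ))) ≠ 0 :=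
  ⟨fun _ hi hi' => beta_eq_zero hi (by omega), beta_ne_zero (by omega) hz⟩

theorem zeta_is_first_nonzero_beta (s : ℕ) (hs : 2 ≤ s) (hz : s / 2 + 1 ≤ s) :
    (∀ i : ℕ, 1 ≤ i → i ≤ s / 2 →
      (∑ q ∈ Finset.Icc (2 * i - s) (min (2 * i) s),
          ((-1 : ℝ) ^ ((i : ℤ) - (q : ℤ))) /
            ((Nat.factorial q : ℝ) * (Nat.factorial (2 * i - q) : ℝ))) = 0)
    ∧ (∑ q ∈ Finset.Icc (2 * (s / 2 + 1) - s) (min (2 * (s / 2 + 1)) s),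
        ((-1 : ℝ) ^ (((s / 2 + 1 : ℕ) : ℤ) - (q : ℤ))) /
          ((Nat.factorial q : ℝ) * (Nat.factorial (2 * (s / 2 + 1) - q) : ℝ))) ≠ 0 :=
  zeta_is_first_nonzero_beta_general s hz
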